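/- arXiv:math/0203061 — 10 statements merged into one kernel-verified Lean document; each statement's English description precedes it below -/
import Mathlib

section
/- Let n, m, l, t ∈ ℤ with m ≠ 0, n² + m² = l², l ≥ 0, and n + l = t². Then there exists k ∈ ℤ such that m = kt and (t + ik)² = 2(n + im) in ℤ[i]; in particular the Gaussian integer 2(n + im) has a square root in ℤ[i]. -/
/-!
From `n² + m² = l²` and `n + l = t²` we get `m² = (l - n) t²`. As `m ≠ 0` forces `t ≠ 0`, and ℤ is
integrally closed, `t² ∣ m²` gives `t ∣ m`; writing `m = k t` and cancelling `t²` yields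
`k² = l - n`. Then `(t + ik)² = (t² - k²) + 2tki = 2n + 2mi`.
-/

theorem Zsqrtd.mk_sq {d : ℤ} (a b : ℤ) : (⟨a, b⟩ : ℤ√d) ^ 2 = ⟨a ^ 2 + d * b ^ 2, 2 * a * b⟩ := by
  ext <;> simp only [sq, Zsqrtd.re_mul, Zsqrtd.im_mul] <;> ring

section Pythagorean

variable {R : Type*} [CommRing R] {n m l t : R}

theorem sq_eq_sub_mul_sq_of_add_sq_eq_sq (hpyth : n ^ 2 + m ^ 2 = l ^ 2) (ht : n + l = t ^ 2) :
    m ^ 2 = (l - n) * t ^ 2 := by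
  linear_combination hpyth + (l - n) * ht

variable [IsDomain R] [IsIntegrallyClosed R]

theorem exists_eq_mul_and_sq_eq_sub_of_add_sq_eq_sq (hm : m ≠ 0)
    (hpyth : n ^ 2 + m ^ 2 = l ^ 2) (ht : n + l = t ^ 2) :
    ∃ k, m = k * t ∧ k ^ 2 = l - n := by
  have hmsq := sq_eq_sub_mul_sq_of_add_sq_eq_sq hpyth ht
  have htsq : t ^ 2 ≠ 0 := by
    intro h
    rw [h, mul_zero] at hmsq
    exact hm (pow_eq_zero_iff two_ne_zero |>.mp hmsq)
  obtain ⟨k, rfl⟩ : t ∣ m :=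
    (IsIntegrallyClosed.pow_dvd_pow_iff two_ne_zero).mp ⟨l - n, by rw [hmsq, mul_comm]⟩
  refine ⟨k, mul_comm t k, mul_right_cancel₀ htsq ?_⟩
  rw [← mul_pow, mul_comm k, hmsq]

end Pythagorean

theorem square_radical_of_pythagorean_general (n m l t : ℤ) (hm : m ≠ 0)
    (hpyth : n ^ 2 + m ^ 2 = l ^ 2) (ht : n + l = t ^ 2) :
    (∃ k : ℤ, m = k * t ∧ (⟨t, k⟩ : GaussianInt) ^ 2 = 2 * ⟨n, m⟩) ∧
    ∃ z : GaussianInt, z ^ 2 = 2 * ⟨n, m⟩ := by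
  obtain ⟨k, hk, hksq⟩ := exists_eq_mul_and_sq_eq_sub_of_add_sq_eq_sq hm hpyth ht
  have hsq : (⟨t, k⟩ : GaussianInt) ^ 2 = 2 * ⟨n, m⟩ := by
    rw [Zsqrtd.mk_sq]
    ext
    · simp only [Zsqrtd.re_mul, Zsqrtd.re_ofNat, Zsqrtd.im_ofNat]
      linear_combination -ht - hksq
    · simp only [Zsqrtd.im_mul, Zsqrtd.re_ofNat, Zsqrtd.im_ofNat]
      linear_combination -2 * hk
  exact ⟨⟨k, hk, hsq⟩, ⟨t, k⟩, hsq⟩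

/-- square radical of a Gaussian integer coming from a
Pythagorean triple.  If `n² + m² = l²` with `m ≠ 0`, `l ≥ 0` and
`n + l = t²`, then there is `k ∈ ℤ` with `m = k·t` and
`(t + ik)² = 2(n + im)` in `ℤ[i]`; in particular `2(n + im)` has a
square root in `ℤ[i]`. -/
theorem square_radical_of_pythagorean (n m l t : ℤ) (hm : m ≠ 0)
    (hpyth : n ^ 2 + m ^ 2 = l ^ 2) (hl : 0 ≤ l) (ht : n + l = t ^ 2) :
    (∃ k : ℤ, m = k * t ∧ (⟨t, k⟩ : GaussianInt) ^ 2 = 2 * ⟨n, m⟩) ∧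
    ∃ z : GaussianInt, z ^ 2 = 2 * ⟨n, m⟩ :=
  square_radical_of_pythagorean_general n m l t hm hpyth ht
end

section
/- The equation x⁴ + y⁴ = z⁴ has no solutions in nonzero Gaussian integers: if x, y, z ∈ ℤ[i] satisfy x⁴ + y⁴ = z⁴, then x = 0 or y = 0 or z = 0. -/
/-!
Descent at the prime `λ = 1 + i` above `2`. Coprime `x, y` cannot both be prime to `λ`
(else `x⁴ + y⁴ ≡ 2` but `z⁴ ≡ 0 mod 4`), so one of them is `λⁿ β` with `β` prime to `λ`, and the
equation becomes `ε μ² = α⁴ + δ λ^(4n) β⁴` with units `ε, δ` and `α, β, μ` prime to `λ`.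
For `n = 0` this fails modulo `λ`. For `n ≥ 1`, reducing modulo `4` forces `ε = ±1`, so the left
side is a square `ν²`; then `ν ∓ α² = λ² A, λ² B` with `A, B` coprime, `A B = δ λ^(4(n-1)) β⁴` and
`B - A = -i α²`. One of `A, B` is prime to `λ`, the other is `λ^(4(n-1))` times a cofactor, both
are then units times fourth powers `s⁴, t⁴`, and `B - A = -i α²` is an equation of the same shape
with `n - 1`.
-/

open Zsqrtd

namespace GaussianInt

local notation "ℤ[i]" => GaussianInt

-- In `ℤ√-1`, `sqrtd` is `i`, and `lam` is `λ = 1 + i`.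
def lam : ℤ[i] := ⟨1, 1⟩

theorem lam_pow_four : lam ^ 4 = -4 := by decide

theorem two_eq_neg_sqrtd_mul_lam_sq : (2 : ℤ[i]) = -sqrtd * lam ^ 2 := by decide

theorem sqrtd_sq : (sqrtd : ℤ[i]) ^ 2 = -1 := by decide

theorem isUnit_sqrtd : IsUnit (sqrtd : ℤ[i]) := .of_mul_eq_one (-sqrtd) (by decide)

theorem lam_dvd_iff {z : ℤ[i]} : lam ∣ z ↔ 2 ∣ z.re + z.im := by
  constructor
  · rintro ⟨w, rfl⟩
    exact ⟨w.re, by simp [lam]; ring⟩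
  · rintro ⟨k, hk⟩
    exact ⟨⟨k, z.im - k⟩, by ext <;> simp [lam]; omega⟩

theorem lam_prime : Prime lam := by
  refine ⟨by decide, fun h => ?_, fun a b h => ?_⟩
  · have := lam_dvd_iff.mp (h.dvd : lam ∣ 1)
    norm_num at this
  · simp only [lam_dvd_iff, re_mul, im_mul] at h ⊢
    apply Int.prime_two.dvd_mul.mp
    have := h.add (dvd_mul_right 2 (a.im * b.im))
    convert this using 1
    ring

theorem lam_ne_zero : lam ≠ 0 := lam_prime.ne_zero

theorem lam_dvd_add {a b : ℤ[i]} (ha : ¬lam ∣ a) (hb : ¬lam ∣ b) : lam ∣ a + b := by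
  rw [lam_dvd_iff] at *
  simp only [re_add, im_add]
  omega

theorem lam_dvd_sub {a b : ℤ[i]} (ha : ¬lam ∣ a) (hb : ¬lam ∣ b) : lam ∣ a - b := by
  rw [lam_dvd_iff] at *
  simp only [re_sub, im_sub]
  omega

theorem four_dvd_iff {z : ℤ[i]} : 4 ∣ z ↔ 4 ∣ z.re ∧ 4 ∣ z.im := by
  exact_mod_cast intCast_dvd 4 z

theorem four_dvd_sq_sub_one_or_sq_add_one {z : ℤ[i]} (hz : ¬lam ∣ z) :
    4 ∣ z ^ 2 - 1 ∨ 4 ∣ z ^ 2 + 1 := by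
  obtain ⟨a, b⟩ := z
  rw [lam_dvd_iff] at hz
  dsimp only at hz
  rcases Int.even_or_odd' a with ⟨m, rfl | rfl⟩ <;> rcases Int.even_or_odd' b with ⟨t, rfl | rfl⟩
  · omega
  · exact .inr ⟨⟨m * m - t * t - t, m * (2 * t + 1)⟩, by ext <;> simp [sq] <;> ring⟩
  · exact .inl ⟨⟨m * m + m - t * t, t * (2 * m + 1)⟩, by ext <;> simp [sq] <;> ring⟩
  · omega

theorem four_dvd_pow_four_sub_one {z : ℤ[i]} (hz : ¬lam ∣ z) : 4 ∣ z ^ 4 - 1 := by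
  rcases four_dvd_sq_sub_one_or_sq_add_one hz with h | h
  · exact (h.mul_right (z ^ 2 + 1)).trans (dvd_of_eq (by ring))
  · exact (h.mul_right (z ^ 2 - 1)).trans (dvd_of_eq (by ring))

theorem eq_one_of_four_dvd_sub_one {u : ℤ[i]} (hu : IsUnit u) (h : 4 ∣ u - 1) : u = 1 := by
  have hnorm := (norm_eq_one_iff' (by norm_num) u).mpr hu
  obtain ⟨⟨p, hp⟩, ⟨q, hq⟩⟩ := four_dvd_iff.mp h
  simp only [re_sub, re_one, im_sub, im_one, sub_zero] at hp hq
  rw [norm_def, hq, show u.re = 4 * p + 1 by omega] at hnorm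
  have hp0 : p = 0 := by nlinarith [sq_nonneg q]
  have hq0 : q = 0 := by subst hp0; nlinarith
  ext <;> simp <;> omega

theorem exists_sq_eq_unit_mul_sq {ε μ : ℤ[i]} (hε : IsUnit ε) (hμ : ¬lam ∣ μ)
    (h : 4 ∣ ε * μ ^ 2 - 1) : ∃ ν, ν ^ 2 = ε * μ ^ 2 := by
  rcases four_dvd_sq_sub_one_or_sq_add_one hμ with hμ2 | hμ2
  · have hε1 : ε = 1 := eq_one_of_four_dvd_sub_one hε <| by
      convert h.sub (hμ2.mul_left ε) using 1; ring
    exact ⟨μ, by rw [hε1, one_mul]⟩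
  · have hε1 : -ε = 1 := eq_one_of_four_dvd_sub_one hε.neg <| by
      convert h.sub (hμ2.mul_left ε) using 1; ring
    exact ⟨sqrtd * μ, by rw [mul_pow, sqrtd_sq, ← hε1, neg_neg]⟩

theorem lam_sq_dvd_sub_and_add {ν a : ℤ[i]} (hν : ¬lam ∣ ν) (ha : ¬lam ∣ a)
    (h : lam ^ 3 ∣ (ν - a) * (ν + a)) : lam ^ 2 ∣ ν - a ∧ lam ^ 2 ∣ ν + a := by
  obtain ⟨c, hc⟩ := lam_dvd_sub hν ha
  obtain ⟨d, hd⟩ := lam_dvd_add hν ha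
  have hdc : lam ∣ d - c := ⟨-sqrtd * a, mul_left_cancel₀ lam_ne_zero <| by
    linear_combination hc - hd + a * two_eq_neg_sqrtd_mul_lam_sq⟩
  have hcd : lam ∣ c * d := by
    rw [hc, hd, show lam * c * (lam * d) = lam ^ 2 * (c * d) by ring, pow_succ] at h
    exact (mul_dvd_mul_iff_left (pow_ne_zero 2 lam_ne_zero)).mp h
  have hc' : lam ∣ c := (lam_prime.dvd_mul.mp hcd).elim id (dvd_iff_dvd_of_dvd_sub hdc).mp
  have hd' : lam ∣ d := (dvd_iff_dvd_of_dvd_sub hdc).mpr hc'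
  rw [hc, hd, sq]
  exact ⟨mul_dvd_mul_left lam hc', mul_dvd_mul_left lam hd'⟩

def DescentSolvable (n : ℕ) : Prop :=
  ∃ α β μ ε δ : ℤ[i], IsUnit ε ∧ IsUnit δ ∧ ¬lam ∣ α ∧ ¬lam ∣ β ∧ ¬lam ∣ μ ∧ IsCoprime α β ∧
    ε * μ ^ 2 = α ^ 4 + δ * lam ^ (4 * n) * β ^ 4

theorem not_descentSolvable_zero : ¬DescentSolvable 0 := by
  rintro ⟨α, β, μ, ε, δ, hε, hδ, hα, hβ, hμ, -, h⟩
  have hsum : lam ∣ α ^ 4 + δ * lam ^ (4 * 0) * β ^ 4 := by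
    refine lam_dvd_add (mt lam_prime.dvd_of_dvd_pow hα) ?_
    rw [mul_zero, pow_zero, mul_one, hδ.dvd_mul_left]
    exact mt lam_prime.dvd_of_dvd_pow hβ
  rw [← h, hε.dvd_mul_left] at hsum
  exact hμ (lam_prime.dvd_of_dvd_pow hsum)

theorem descentSolvable_of_factorization {P Q α β δ η : ℤ[i]} (m : ℕ) (hδ : IsUnit δ)
    (hη : IsUnit η) (hP : ¬lam ∣ P) (hα : ¬lam ∣ α) (hβ : ¬lam ∣ β) (hPQ : IsCoprime P Q)
    (hmul : P * Q = δ * lam ^ (4 * m) * β ^ 4) (hsub : P - Q = η * α ^ 2) :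
    DescentSolvable m := by
  obtain ⟨R, rfl⟩ : lam ^ (4 * m) ∣ Q :=
    ((lam_prime.coprime_iff_not_dvd.mpr hP).pow_left).dvd_of_dvd_mul_left
      ⟨δ * β ^ 4, by rw [hmul]; ring⟩
  have hPR : P * R = δ * β ^ 4 := mul_left_cancel₀ (pow_ne_zero (4 * m) lam_ne_zero) <| by
    linear_combination hmul
  have hcop : IsCoprime P R := hPQ.of_mul_right_right
  obtain ⟨s, hs⟩ := exists_associated_pow_of_associated_pow_mul hcop ⟨hδ.unit, by
    rw [hPR, IsUnit.unit_spec, mul_comm]⟩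
  obtain ⟨t, ht⟩ := exists_associated_pow_of_associated_pow_mul hcop.symm ⟨hδ.unit, by
    rw [mul_comm R, hPR, IsUnit.unit_spec, mul_comm]⟩
  obtain ⟨u, rfl⟩ := hs
  obtain ⟨v, rfl⟩ := ht
  have hR : ¬lam ∣ t ^ 4 * v := fun hlam =>
    hβ (lam_prime.dvd_of_dvd_pow ((hδ.dvd_mul_left).mp (hPR ▸ hlam.mul_left _)))
  refine ⟨s, t, α, η * ↑u⁻¹, -(v * ↑u⁻¹), hη.mul u⁻¹.isUnit, (v.isUnit.mul u⁻¹.isUnit).neg,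
    fun h => hP (h.pow four_ne_zero |>.mul_right _), fun h => hR (h.pow four_ne_zero |>.mul_right _),
    hα, ?_, ?_⟩
  · exact (hcop.of_isCoprime_of_dvd_left ((dvd_pow_self s four_ne_zero).mul_right _))
      |>.of_isCoprime_of_dvd_right ((dvd_pow_self t four_ne_zero).mul_right _)
  · have hu : (u : ℤ[i]) * ↑u⁻¹ = 1 := u.mul_inv
    linear_combination (↑u⁻¹ : ℤ[i]) * hsub.symm + s ^ 4 * hu

theorem exists_isCoprime_factors {ν α β δ : ℤ[i]} {n : ℕ} (hδ : IsUnit δ) (hν : ¬lam ∣ ν)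
    (hα : ¬lam ∣ α) (hαβ : IsCoprime α β) (h : ν ^ 2 = α ^ 4 + δ * lam ^ (4 * (n + 1)) * β ^ 4) :
    ∃ A B, IsCoprime A B ∧ A * B = δ * lam ^ (4 * n) * β ^ 4 ∧ B - A = -sqrtd * α ^ 2 := by
  have hα2 : ¬lam ∣ α ^ 2 := mt lam_prime.dvd_of_dvd_pow hα
  have hprod : (ν - α ^ 2) * (ν + α ^ 2) = lam ^ 4 * (δ * lam ^ (4 * n) * β ^ 4) := by
    linear_combination h
  obtain ⟨⟨A, hA⟩, ⟨B, hB⟩⟩ := lam_sq_dvd_sub_and_add hν hα2 <|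
    hprod ▸ ⟨lam * (δ * lam ^ (4 * n) * β ^ 4), by ring⟩
  have hlam2 : lam ^ 2 ≠ 0 := pow_ne_zero 2 lam_ne_zero
  have hsub : B - A = -sqrtd * α ^ 2 := mul_left_cancel₀ hlam2 <| by
    linear_combination hA - hB + α ^ 2 * two_eq_neg_sqrtd_mul_lam_sq
  have hadd : A + B = -sqrtd * ν := mul_left_cancel₀ hlam2 <| by
    linear_combination -hA - hB + ν * two_eq_neg_sqrtd_mul_lam_sq
  have hνα : IsCoprime ν (α ^ 2) := by
    have hαD : IsCoprime α (δ * lam ^ (4 * (n + 1)) * β ^ 4) := by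
      rw [mul_assoc, isCoprime_mul_unit_left_right hδ]
      exact ((lam_prime.coprime_iff_not_dvd.mpr hα).symm.pow_right).mul_right hαβ.pow_right
    have := hαD.pow_left (m := 4) |>.add_mul_left_right 1
    rw [mul_one, add_comm, ← h, show α ^ 4 = (α ^ 2) ^ 2 by ring,
      IsCoprime.pow_iff two_pos two_pos] at this
    exact this.symm
  refine ⟨A, B, ?_, mul_left_cancel₀ (pow_ne_zero 4 lam_ne_zero) ?_, hsub⟩
  · obtain ⟨p, q, hpq⟩ := (isCoprime_mul_unit_left isUnit_sqrtd.neg _ _).mpr hνα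
    exact ⟨p - q, p + q, by linear_combination hpq + p * hadd + q * hsub⟩
  · linear_combination hprod - (lam ^ 2 * B) * hA - (ν - α ^ 2) * hB

theorem descentSolvable_of_succ {n : ℕ} : DescentSolvable (n + 1) → DescentSolvable n := by
  rintro ⟨α, β, μ, ε, δ, hε, hδ, hα, hβ, hμ, hαβ, h⟩
  have hlam : 4 ∣ lam ^ (4 * (n + 1)) :=
    ⟨-lam ^ (4 * n), by rw [mul_add, mul_one, pow_add, lam_pow_four]; ring⟩
  obtain ⟨ν, hν2⟩ := exists_sq_eq_unit_mul_sq hε hμ <| by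
    convert (four_dvd_pow_four_sub_one hα).add ((hlam.mul_left δ).mul_right (β ^ 4)) using 1
    rw [h]; ring
  have hν : ¬lam ∣ ν := fun hl =>
    hμ (lam_prime.dvd_of_dvd_pow (hε.dvd_mul_left.mp (hν2 ▸ dvd_pow hl two_ne_zero)))
  rw [← hν2] at h
  obtain ⟨A, B, hAB, hmul, hsub⟩ := exists_isCoprime_factors hδ hν hα hαβ h
  by_cases hA : lam ∣ A
  · have hB : ¬lam ∣ B := fun hB => mt lam_prime.dvd_of_dvd_pow hα <|
      isUnit_sqrtd.neg.dvd_mul_left.mp (hsub ▸ dvd_sub hB hA)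
    exact descentSolvable_of_factorization n hδ isUnit_sqrtd.neg hB hα hβ hAB.symm
      (by rw [mul_comm, hmul]) hsub
  · exact descentSolvable_of_factorization n hδ isUnit_sqrtd hA hα hβ hAB hmul
      (by linear_combination -hsub)

theorem not_descentSolvable (n : ℕ) : ¬DescentSolvable n := by
  induction n with
  | zero => exact not_descentSolvable_zero
  | succ n ih => exact mt descentSolvable_of_succ ih

theorem fermat_four_of_not_lam_dvd {x y z : ℤ[i]} (hx : ¬lam ∣ x) (hy : ¬lam ∣ y) :
    x ^ 4 + y ^ 4 ≠ z ^ 4 := by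
  intro h
  obtain ⟨w, rfl⟩ : lam ∣ z := lam_prime.dvd_of_dvd_pow <| h ▸
    lam_dvd_add (mt lam_prime.dvd_of_dvd_pow hx) (mt lam_prime.dvd_of_dvd_pow hy)
  have h42 : (4 : ℤ[i]) ∣ 2 := by
    convert (dvd_mul_right 4 (-w ^ 4)).sub
      ((four_dvd_pow_four_sub_one hx).add (four_dvd_pow_four_sub_one hy)) using 1
    rw [mul_pow, lam_pow_four] at h
    linear_combination h
  norm_num [four_dvd_iff] at h42

theorem fermat_four_of_lam_dvd {x y z : ℤ[i]} (hx0 : x ≠ 0) (hx : lam ∣ x) (hy : ¬lam ∣ y)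
    (hxy : IsCoprime x y) : x ^ 4 + y ^ 4 ≠ z ^ 4 := by
  intro h
  have hz : ¬lam ∣ z ^ 2 := fun hz => hy <| lam_prime.dvd_of_dvd_pow (n := 4) <| by
    rw [show y ^ 4 = (z ^ 2) ^ 2 - x ^ 4 by linear_combination h]
    exact dvd_sub (dvd_pow hz two_ne_zero) (dvd_pow hx four_ne_zero)
  obtain ⟨k, u, hu, rfl⟩ := WfDvdMonoid.max_power_factor hx0 lam_prime.irreducible
  refine not_descentSolvable k ⟨y, u, z ^ 2, 1, 1, isUnit_one, isUnit_one, hy, hu, hz,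
    hxy.symm.of_isCoprime_of_dvd_right (dvd_mul_left u _), ?_⟩
  linear_combination -h

theorem fermat_four_of_isCoprime {x y z : ℤ[i]} (hx0 : x ≠ 0) (hy0 : y ≠ 0)
    (hxy : IsCoprime x y) : x ^ 4 + y ^ 4 ≠ z ^ 4 := by
  by_cases hx : lam ∣ x
  · exact fermat_four_of_lam_dvd hx0 hx
      (fun hy => lam_prime.not_isUnit (hxy.isUnit_of_dvd' hx hy)) hxy
  by_cases hy : lam ∣ y
  · rw [add_comm]
    exact fermat_four_of_lam_dvd hy0 hy hx hxy.symm
  · exact fermat_four_of_not_lam_dvd hx hy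

end GaussianInt

/-- Fermat's Last Theorem for exponent 4 in `ℤ[i]`: the
equation `x⁴ + y⁴ = z⁴` has no solution in nonzero Gaussian integers. -/
theorem fermat_four_gaussian (x y z : GaussianInt)
    (h : x ^ 4 + y ^ 4 = z ^ 4) : x = 0 ∨ y = 0 ∨ z = 0 := by
  by_contra! hxyz
  obtain ⟨hx, hy, -⟩ := hxyz
  obtain ⟨x', y', d, hxy', rfl, rfl⟩ := UniqueFactorizationMonoid.exists_reduced_factors' x y hy
  obtain ⟨z', rfl⟩ : d ∣ z :=
    (IsIntegrallyClosed.pow_dvd_pow_iff four_ne_zero).mp ⟨x' ^ 4 + y' ^ 4, by rw [← h]; ring⟩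
  refine GaussianInt.fermat_four_of_isCoprime (z := z') (right_ne_zero_of_mul hx)
    (right_ne_zero_of_mul hy) (isRelPrime_iff_isCoprime.mp hxy') ?_
  exact mul_left_cancel₀ (pow_ne_zero 4 (left_ne_zero_of_mul hx)) (by linear_combination h)
end

section
/- Let α be a Gauss-Pythagorean integer whose norm satisfies N(α) = p² for some prime number p. Then α is a prime (indecomposable) element of the multiplicative semigroup of Gauss-Pythagorean integers: it is impossible to write α = βγ with both β and γ Gauss-Pythagorean integers. -/
/-- A Gaussian integer `α = x + iy` is Gauss-Pythagorean if `x ≠ 0`,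
`y ≠ 0` and `x² + y² = z²` for some integer `z`. -/
def IsGaussPythagorean (α : GaussianInt) : Prop :=
  α.re ≠ 0 ∧ α.im ≠ 0 ∧ ∃ z : ℤ, α.re ^ 2 + α.im ^ 2 = z ^ 2

lemma gp_norm_sq {β : GaussianInt} (h : IsGaussPythagorean β) :
    ∃ z : ℤ, Zsqrtd.norm β = z ^ 2 ∧ 2 ≤ Zsqrtd.norm β := by
  obtain ⟨hre, him, z, hz⟩ := h
  refine ⟨z, ?_, ?_⟩
  · rw [Zsqrtd.norm]; ring_nf; linarith [hz]
  · have h1 : 1 ≤ β.re ^ 2 := by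
      nlinarith [Int.one_le_abs hre, sq_abs β.re, abs_nonneg β.re]
    have h2 : 1 ≤ β.im ^ 2 := by
      nlinarith [Int.one_le_abs him, sq_abs β.im, abs_nonneg β.im]
    rw [Zsqrtd.norm]; nlinarith

/-- a Gauss-Pythagorean integer whose norm is `p²` for a
prime `p` is indecomposable in the multiplicative semigroup of
Gauss-Pythagorean integers. -/
theorem gauss_pythagorean_prime_of_norm_prime_sq (α : GaussianInt)
    (hα : IsGaussPythagorean α)
    (p : ℕ) (hp : p.Prime) (hnorm : Zsqrtd.norm α = (p : ℤ) ^ 2) :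
    ¬ ∃ β γ : GaussianInt, IsGaussPythagorean β ∧ IsGaussPythagorean γ ∧
        α = β * γ := by
  rintro ⟨β, γ, hβ, hγ, rfl⟩
  obtain ⟨b, hb, hb2⟩ := gp_norm_sq hβ
  obtain ⟨c, hc, hc2⟩ := gp_norm_sq hγ
  rw [Zsqrtd.norm_mul, hb, hc] at hnorm
  have h : (b * c) ^ 2 = (p : ℤ) ^ 2 := by ring_nf; ring_nf at hnorm; linarith
  have habs : b.natAbs * c.natAbs = p := by
    have := congrArg Int.natAbs h
    simp [Int.natAbs_pow, Int.natAbs_mul] at this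
    nlinarith [this, Nat.zero_le (b.natAbs * c.natAbs)]
  have hbdvd : b.natAbs ∣ p := ⟨c.natAbs, habs.symm⟩
  rcases (hp.eq_one_or_self_of_dvd _ hbdvd) with h1 | h1
  · have : b ^ 2 = 1 := by
      rcases Int.natAbs_eq_iff.mp h1 with h | h <;> rw [h] <;> norm_num
    rw [this] at hb; omega
  · have hc1 : c.natAbs = 1 := by
      rw [h1] at habs
      have hppos := hp.pos
      nlinarith [habs]
    have : c ^ 2 = 1 := by
      rcases Int.natAbs_eq_iff.mp hc1 with h | h <;> rw [h] <;> norm_num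
    rw [this] at hc; omega
end

section
/- There exist infinitely many indecomposable Gauss-Pythagorean integers: the set of Gauss-Pythagorean integers α that cannot be written as a product α = βγ of two Gauss-Pythagorean integers β, γ is infinite. -/
lemma gp_norm_key {p : ℕ} (hp : p.Prime) (h4 : p % 4 = 1) :
    ∃ α : GaussianInt,
      (IsGaussPythagorean α ∧
        ¬ ∃ β γ : GaussianInt, IsGaussPythagorean β ∧ IsGaussPythagorean γ ∧ α = β * γ) ∧
      α.re ^ 2 + α.im ^ 2 = (p : ℤ) ^ 2 := by
  haveI : Fact p.Prime := ⟨hp⟩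
  obtain ⟨a, b, hab⟩ := Nat.Prime.sq_add_sq (p := p) (by omega)
  have hp5 : 5 ≤ p := by have := hp.two_le; omega
  have ha : a ≠ 0 := by
    rintro rfl
    have hbb : b * b = p := by nlinarith [hab]
    rcases hp.eq_one_or_self_of_dvd b ⟨b, hbb.symm⟩ with h | h
    · subst h; omega
    · subst h; nlinarith [hp5]
  have hb : b ≠ 0 := by
    rintro rfl
    have haa : a * a = p := by nlinarith [hab]
    rcases hp.eq_one_or_self_of_dvd a ⟨a, haa.symm⟩ with h | h
    · subst h; omega
    · subst h; nlinarith [hp5]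
  have hne : a ≠ b := by rintro rfl; omega
  have hcast : ((a : ℤ) ^ 2 + (b : ℤ) ^ 2) = (p : ℤ) := by exact_mod_cast hab
  have hmain : ((a : ℤ) ^ 2 - (b : ℤ) ^ 2) ^ 2 + (2 * (a : ℤ) * b) ^ 2 = (p : ℤ) ^ 2 := by
    rw [← hcast]; ring
  refine ⟨⟨(a : ℤ) ^ 2 - (b : ℤ) ^ 2, 2 * a * b⟩, ⟨⟨?_, ?_, p, hmain⟩, ?_⟩, hmain⟩
  · -- re ≠ 0
    show (a : ℤ) ^ 2 - (b : ℤ) ^ 2 ≠ 0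
    rw [sub_ne_zero]
    intro h
    have : (a : ℤ) = b := by
      nlinarith [Int.natCast_nonneg a, Int.natCast_nonneg b]
    exact hne (by exact_mod_cast this)
  · -- im ≠ 0
    show (2 * (a : ℤ) * b) ≠ 0
    have ha' : (a : ℤ) ≠ 0 := by exact_mod_cast ha
    have hb' : (b : ℤ) ≠ 0 := by exact_mod_cast hb
    positivity
  · -- indecomposable
    rintro ⟨β, γ, ⟨hbr, hbi, zb, hzb⟩, ⟨hcr, hci, zc, hzc⟩, heq⟩
    have hnormβ : Zsqrtd.norm β = zb ^ 2 := by
      rw [Zsqrtd.norm_def]; ring_nf; ring_nf at hzb; linarith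
    have hnormγ : Zsqrtd.norm γ = zc ^ 2 := by
      rw [Zsqrtd.norm_def]; ring_nf; ring_nf at hzc; linarith
    have hnormα : Zsqrtd.norm (⟨(a : ℤ) ^ 2 - (b : ℤ) ^ 2, 2 * a * b⟩ : GaussianInt)
        = (p : ℤ) ^ 2 := by
      rw [Zsqrtd.norm_def]; rw [← hmain]; ring
    have hmul : (p : ℤ) ^ 2 = zb ^ 2 * zc ^ 2 := by
      rw [← hnormβ, ← hnormγ, ← Zsqrtd.norm_mul, ← heq, hnormα]
    have h2b : (2 : ℤ) ≤ zb ^ 2 := by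
      have h1 : 0 < β.re ^ 2 := by positivity
      have h2 : 0 < β.im ^ 2 := by positivity
      rw [← hzb]; linarith
    have h2c : (2 : ℤ) ≤ zc ^ 2 := by
      have h1 : 0 < γ.re ^ 2 := by positivity
      have h2 : 0 < γ.im ^ 2 := by positivity
      rw [← hzc]; linarith
    -- move to ℕ
    have hnat : p * p = (zb.natAbs * zc.natAbs) * (zb.natAbs * zc.natAbs) := by
      have h : ((p : ℤ)) * p
          = (((zb.natAbs : ℤ)) * zc.natAbs) * (((zb.natAbs : ℤ)) * zc.natAbs) := by
        have e1 := Int.natAbs_sq zb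
        have e2 := Int.natAbs_sq zc
        nlinarith [hmul, e1, e2]
      exact_mod_cast h
    have hmn : p = zb.natAbs * zc.natAbs := Nat.mul_self_inj.mp hnat
    have h2b' : 2 ≤ zb.natAbs ^ 2 := by
      have h : ((zb.natAbs ^ 2 : ℕ) : ℤ) = zb ^ 2 := by exact_mod_cast Int.natAbs_sq zb
      have : (2 : ℤ) ≤ ((zb.natAbs ^ 2 : ℕ) : ℤ) := by rw [h]; exact h2b
      exact_mod_cast this
    have h2c' : 2 ≤ zc.natAbs ^ 2 := by
      have h : ((zc.natAbs ^ 2 : ℕ) : ℤ) = zc ^ 2 := by exact_mod_cast Int.natAbs_sq zc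
      have : (2 : ℤ) ≤ ((zc.natAbs ^ 2 : ℕ) : ℤ) := by rw [h]; exact h2c
      exact_mod_cast this
    have hc2 : 2 ≤ zc.natAbs := by
      by_contra h'
      push_neg at h'
      have h1 : zc.natAbs ^ 2 ≤ 1 := by
        simpa using Nat.pow_le_pow_left (by omega : zc.natAbs ≤ 1) 2
      linarith [h2c', h1]
    rcases hp.eq_one_or_self_of_dvd zb.natAbs ⟨zc.natAbs, hmn⟩ with h | h
    · rw [h] at h2b'; norm_num at h2b'
    · rw [h] at hmn
      have hle : p * 2 ≤ p * zc.natAbs := Nat.mul_le_mul_left p hc2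
      have := hp.pos
      omega

/-- there are infinitely many indecomposable
Gauss-Pythagorean integers, i.e. Gauss-Pythagorean integers that cannot
be written as a product of two Gauss-Pythagorean integers. -/
theorem infinitely_many_indecomposable_gauss_pythagorean :
    {α : GaussianInt | IsGaussPythagorean α ∧
      ¬ ∃ β γ : GaussianInt, IsGaussPythagorean β ∧ IsGaussPythagorean γ ∧
          α = β * γ}.Infinite := by
  classical
  set S := {α : GaussianInt | IsGaussPythagorean α ∧
      ¬ ∃ β γ : GaussianInt, IsGaussPythagorean β ∧ IsGaussPythagorean γ ∧
          α = β * γ} with hS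
  have key : ∀ p : ℕ, p.Prime → p % 4 = 1 → ∃ α : GaussianInt, α ∈ S ∧
      α.re ^ 2 + α.im ^ 2 = (p : ℤ) ^ 2 := fun p hp h4 => gp_norm_key hp h4
  set P : Set ℕ := {p : ℕ | p.Prime ∧ p % 4 = 1} with hP
  have hPinf : P.Infinite := by
    apply Set.infinite_of_not_bddAbove
    rintro ⟨n, hn⟩
    obtain ⟨p, hp, hnp, hmod⟩ := Nat.exists_prime_gt_modEq_one (k := 4) n (by norm_num)
    have : p ∈ P := ⟨hp, by simpa [Nat.ModEq] using hmod⟩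
    exact absurd (hn this) (by omega)
  choose F hF1 hF2 using fun p (h : p ∈ P) => key p h.1 h.2
  let f : ℕ → GaussianInt := fun p => if h : p ∈ P then F p h else 0
  apply Set.infinite_of_injOn_mapsTo (s := P) (f := f) _ _ hPinf
  · intro p hp q hq hfq
    simp only [f, dif_pos hp, dif_pos hq] at hfq
    have h1 := hF2 p hp
    have h2 := hF2 q hq
    rw [hfq, h2] at h1
    have : (p : ℤ) = q := by
      have hp0 : (0 : ℤ) ≤ p := Int.natCast_nonneg p
      have hq0 : (0 : ℤ) ≤ q := Int.natCast_nonneg q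
      nlinarith [h1]
    exact_mod_cast this
  · intro p hp
    simp only [f, dif_pos hp]
    exact hF1 p hp
end

section
/- Let α, β, γ be Gaussian integers forming a Pythagorean triple, i.e. α² + β² = γ². Then gcd(N(α), N(β), N(γ)) = 1 in ℤ if and only if every common divisor of α, β and γ in ℤ[i] is a unit. -/
/-!
Norms are multiplicative, so a common divisor `δ` of `α, β, γ` has `N δ` dividing the gcd of the
norms; when that gcd is `1`, `N δ = ±1` and `δ` is a unit. Conversely, if a rational prime `p`
divides all three norms, pick a Gaussian prime `π ∣ p`. Since `N x = x x̄`, each of `α, β, γ` is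
divisible by `π` or by `π̄`, and exchanging `π` with `π̄` we may assume `π ∣ γ`. If `π` divides
one of the legs it divides the other by `α² + β² = γ²`; otherwise `π̄` divides both legs and hence
`γ`. Either way some prime divides all of `α, β, γ`.
-/

theorem star_dvd_of_dvd_star {M : Type*} [CommMonoid M] [StarMul M] {a b : M} (h : a ∣ star b) :
    star a ∣ b := by
  obtain ⟨c, hc⟩ := h
  exact ⟨star c, by rw [← star_mul', ← hc, star_star]⟩

section Pythagorean

variable {R : Type*} [CommRing R] {π a b c : R}

theorem Prime.dvd_of_dvd_of_sq_add_sq_eq_sq (hπ : Prime π) (h : a ^ 2 + b ^ 2 = c ^ 2)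
    (ha : π ∣ a) (hc : π ∣ c) : π ∣ b := by
  have hb : b ^ 2 = c ^ 2 - a ^ 2 := by linear_combination h
  exact hπ.dvd_of_dvd_pow (hb ▸ dvd_sub (dvd_pow hc two_ne_zero) (dvd_pow ha two_ne_zero))

theorem Prime.dvd_of_dvd_of_dvd_of_sq_add_sq_eq_sq (hπ : Prime π) (h : a ^ 2 + b ^ 2 = c ^ 2)
    (ha : π ∣ a) (hb : π ∣ b) : π ∣ c :=
  hπ.dvd_of_dvd_pow (h ▸ dvd_add (dvd_pow ha two_ne_zero) (dvd_pow hb two_ne_zero))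

variable [StarRing R]

theorem Prime.star (hπ : Prime π) : Prime (star π) :=
  (MulEquiv.prime_iff (starRingAut : R ≃+* R)).mpr hπ

theorem exists_prime_dvd_of_sq_add_sq_eq_sq (h : a ^ 2 + b ^ 2 = c ^ 2) (hπ : Prime π)
    (ha : π ∣ a ∨ star π ∣ a) (hb : π ∣ b ∨ star π ∣ b) (hc : π ∣ c ∨ star π ∣ c) :
    ∃ ρ, Prime ρ ∧ ρ ∣ a ∧ ρ ∣ b ∧ ρ ∣ c := by
  wlog hπc : π ∣ c generalizing π
  · exact this hπ.star (by rwa [star_star, or_comm]) (by rwa [star_star, or_comm])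
      (by rwa [star_star, or_comm]) (hc.resolve_left hπc)
  rcases ha with ha | ha
  · exact ⟨π, hπ, ha, hπ.dvd_of_dvd_of_sq_add_sq_eq_sq h ha hπc, hπc⟩
  rcases hb with hb | hb
  · exact ⟨π, hπ, hπ.dvd_of_dvd_of_sq_add_sq_eq_sq (by rwa [add_comm]) hb hπc, hb, hπc⟩
  · exact ⟨star π, hπ.star, ha, hb, hπ.star.dvd_of_dvd_of_dvd_of_sq_add_sq_eq_sq h ha hb⟩

end Pythagorean

namespace Zsqrtd

variable {d : ℤ}

theorem norm_dvd_norm {x y : ℤ√d} (h : x ∣ y) : x.norm ∣ y.norm :=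
  map_dvd normMonoidHom h

theorem _root_.Prime.dvd_or_star_dvd_of_dvd_norm {π x : ℤ√d} {m : ℤ} (hπ : Prime π)
    (hπm : π ∣ (m : ℤ√d)) (hm : m ∣ x.norm) : π ∣ x ∨ star π ∣ x := by
  have hπx : π ∣ x * star x := by
    rw [← norm_eq_mul_conj]
    exact hπm.trans (map_dvd (Int.castRingHom _) hm)
  exact (hπ.dvd_or_dvd hπx).imp_right star_dvd_of_dvd_star

end Zsqrtd

namespace GaussianInt

theorem exists_prime_dvd_natCast {p : ℕ} (hp : p.Prime) :
    ∃ π : GaussianInt, Prime π ∧ π ∣ (p : GaussianInt) := by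
  have hunit : ¬IsUnit (p : GaussianInt) := by
    rw [Zsqrtd.isUnit_iff_norm_isUnit, Zsqrtd.norm_natCast, isUnit_mul_self_iff,
      Int.isUnit_iff_natAbs_eq, Int.natAbs_natCast]
    exact hp.one_lt.ne'
  obtain ⟨π, hπ, hπp⟩ := WfDvdMonoid.exists_irreducible_factor hunit (mod_cast hp.ne_zero)
  exact ⟨π, hπ.prime, hπp⟩

end GaussianInt

/-- for a Pythagorean triple `α² + β² = γ²` in `ℤ[i]`, the
norms have gcd 1 in `ℤ` if and only if every common divisor of `α`, `β`,
`γ` in `ℤ[i]` is a unit. -/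
theorem pythagorean_triple_primitive_iff_coprime_norms (α β γ : GaussianInt)
    (hpyth : α ^ 2 + β ^ 2 = γ ^ 2) :
    Int.gcd (Int.gcd (Zsqrtd.norm α) (Zsqrtd.norm β)) (Zsqrtd.norm γ) = 1 ↔
      ∀ δ : GaussianInt, δ ∣ α → δ ∣ β → δ ∣ γ → IsUnit δ := by
  constructor
  · intro hg δ hα hβ hγ
    have hδ := Int.dvd_coe_gcd (Int.dvd_coe_gcd (Zsqrtd.norm_dvd_norm hα)
      (Zsqrtd.norm_dvd_norm hβ)) (Zsqrtd.norm_dvd_norm hγ)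
    rw [hg, Nat.cast_one] at hδ
    exact (Zsqrtd.isUnit_iff_norm_isUnit δ).mpr (isUnit_of_dvd_one hδ)
  · intro h
    by_contra hg
    obtain ⟨p, hp, hpg⟩ := Nat.exists_prime_and_dvd hg
    obtain ⟨hpαβ, hpγ⟩ := Int.dvd_gcd_iff.mp hpg
    obtain ⟨hpα, hpβ⟩ := Int.dvd_gcd_iff.mp (Int.natCast_dvd_natCast.mp hpαβ)
    obtain ⟨π, hπ, hπp⟩ := GaussianInt.exists_prime_dvd_natCast hp
    rw [← Int.cast_natCast] at hπp
    obtain ⟨ρ, hρ, hρα, hρβ, hργ⟩ := exists_prime_dvd_of_sq_add_sq_eq_sq hpyth hπ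
      (hπ.dvd_or_star_dvd_of_dvd_norm hπp hpα) (hπ.dvd_or_star_dvd_of_dvd_norm hπp hpβ)
      (hπ.dvd_or_star_dvd_of_dvd_norm hπp hpγ)
    exact hρ.not_isUnit (h ρ hρα hρβ hργ)
end

section
/- Let α, β, γ ∈ ℤ[i] be a primitive Pythagorean triple in ℤ[i] (α² + β² = γ² and every common divisor of α, β, γ is a unit), with α even in ℤ[i] and β, γ odd in ℤ[i]. Then there exist κ, τ ∈ ℤ[i] of different parity, with every common divisor of κ and τ a unit, and units ε₁, ε₂, ε₃ of ℤ[i], such that α = 2ε₁κτ and either β = ε₂(κ² − τ²) and γ = ε₃(κ² + τ²), or β = ε₂(κ² + τ²) and γ = ε₃(κ² − τ²). -/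
/-!
Since `β` and `γ` are odd, a computation modulo 4 shows that `2` divides `α` and `γ ± β`.
Writing `α = 2a`, `β = u - v`, `γ = u + v` turns the equation into `u * v = a ^ 2`, where `u` and
`v` are coprime by primitivity. In the principal ideal domain `ℤ[i]` this gives `u = εu κ²`,
`v = εv τ²` and `a = w κ τ` with units `εu, εv, w`, and comparing `a² = u v` yields
`εu εv = w²`. Squares of units of `ℤ[i]` are `±1`, so `εv = ±εu`, which gives the two shapes of
`(β, γ)`. Parities are read off through the reduction `ℤ[i] → ℤ[i] / (1 + i) ≅ 𝔽₂`.
-/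

/-- A Gaussian integer `n + im` is even in `ℤ[i]` if `n` and `m` have
the same parity in `ℤ` (and odd otherwise). -/
def GaussianEven (α : GaussianInt) : Prop := α.re % 2 = α.im % 2

local notation "ℤ[i]" => GaussianInt

theorem exists_associated_sq_of_isCoprime_of_mul_eq_sq {R : Type*} [CommRing R] [IsDomain R]
    [IsBezout R] {u v a : R} (hcop : IsCoprime u v) (h : u * v = a ^ 2) :
    ∃ κ τ : R, ∃ εu εv w : Rˣ, u = εu * κ ^ 2 ∧ v = εv * τ ^ 2 ∧ a = w * κ * τ := by
  obtain ⟨κ, εu, rfl⟩ := exists_associated_pow_of_mul_eq_pow' hcop h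
  obtain ⟨τ, εv, rfl⟩ := exists_associated_pow_of_mul_eq_pow' hcop.symm ((mul_comm _ _).trans h)
  obtain ⟨w, rfl⟩ : Associated (κ * τ) a :=
    (Associated.pow_iff two_ne_zero).mp ⟨εu * εv, by rw [← h]; push_cast; ring⟩
  exact ⟨κ, τ, εu, εv, w, mul_comm _ _, mul_comm _ _, by ring⟩

namespace GaussianInt

theorem two_dvd_iff (x : ℤ[i]) : 2 ∣ x ↔ 2 ∣ x.re ∧ 2 ∣ x.im := by
  exact_mod_cast Zsqrtd.intCast_dvd 2 x

theorem units_sq_eq_one_or_eq_neg_one (η : ℤ[i]ˣ) : η ^ 2 = 1 ∨ η ^ 2 = -1 := by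
  have hnorm := (Zsqrtd.norm_eq_one_iff' (by norm_num) (η : ℤ[i])).mpr η.isUnit
  simp only [Units.ext_iff, Units.val_pow_eq_pow_val, Units.val_neg, Units.val_one]
  generalize (η : ℤ[i]) = z at hnorm ⊢
  obtain ⟨x, y⟩ := z
  rw [Zsqrtd.norm_def] at hnorm
  have hxy : x * y = 0 := by nlinarith [sq_nonneg (x - y), sq_nonneg (x + y)]
  simp only [Zsqrtd.ext_iff, sq, Zsqrtd.re_mul, Zsqrtd.im_mul, Zsqrtd.re_one, Zsqrtd.im_one,
    Zsqrtd.re_neg, Zsqrtd.im_neg]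
  rcases mul_eq_zero.mp hxy with rfl | rfl
  · exact .inr ⟨by linarith, by ring⟩
  · exact .inl ⟨by linarith, by ring⟩

theorem units_eq_or_eq_neg_of_mul_eq_sq {ε₁ ε₂ w : ℤ[i]ˣ} (h : ε₁ * ε₂ = w ^ 2) :
    ε₂ = ε₁ ∨ ε₂ = -ε₁ := by
  have : ε₂ = ε₁ * (ε₁⁻¹ * w) ^ 2 := by rw [mul_pow, ← h]; group
  rcases units_sq_eq_one_or_eq_neg_one (ε₁⁻¹ * w) with h1 | h1 <;> simp [this, h1]

theorem exists_eq_sq_of_isCoprime_of_mul_eq_sq {u v a : ℤ[i]} (hcop : IsCoprime u v)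
    (h : u * v = a ^ 2) :
    ∃ κ τ : ℤ[i], ∃ εu εv w : ℤ[i]ˣ,
      u = εu * κ ^ 2 ∧ v = εv * τ ^ 2 ∧ a = w * κ * τ ∧ (εv = εu ∨ εv = -εu) := by
  obtain ⟨κ, τ, εu, εv, w, rfl, rfl, rfl⟩ := exists_associated_sq_of_isCoprime_of_mul_eq_sq hcop h
  -- If `κ` or `τ` vanishes, the unit in front of its square can be chosen freely.
  by_cases hκ : κ = 0
  · exact ⟨κ, τ, εv, εv, w, by simp [hκ], rfl, rfl, .inl rfl⟩
  by_cases hτ : τ = 0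
  · exact ⟨κ, τ, εu, εu, w, rfl, by simp [hτ], rfl, .inl rfl⟩
  refine ⟨κ, τ, εu, εv, w, rfl, rfl, rfl, units_eq_or_eq_neg_of_mul_eq_sq (w := w) (Units.ext ?_)⟩
  refine mul_left_cancel₀ (pow_ne_zero 2 (mul_ne_zero hκ hτ)) ?_
  push_cast
  linear_combination h

/-- Reduction modulo the prime `1 + i`, identifying `ℤ[i] / (1 + i)` with `ZMod 2` (`i ↦ 1`). -/
def parity : ℤ[i] →+* ZMod 2 := Zsqrtd.lift ⟨1, by decide⟩

end GaussianInt

open GaussianInt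

theorem gaussianEven_iff_two_dvd_re_add_im (x : ℤ[i]) : GaussianEven x ↔ 2 ∣ x.re + x.im := by
  unfold GaussianEven
  omega

theorem gaussianEven_iff_parity_eq_zero (x : ℤ[i]) : GaussianEven x ↔ parity x = 0 := by
  rw [gaussianEven_iff_two_dvd_re_add_im, parity, Zsqrtd.lift_apply_apply, mul_one,
    ← Int.cast_add, ZMod.intCast_zmod_eq_zero_iff_dvd]
  rfl

theorem gaussianEven_unit_mul_pow (ε : ℤ[i]ˣ) (x : ℤ[i]) {n : ℕ} (hn : n ≠ 0) :
    GaussianEven (ε * x ^ n) ↔ GaussianEven x := by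
  simp [gaussianEven_iff_parity_eq_zero, hn, (ε.isUnit.map parity).ne_zero]

theorem not_gaussianEven_add (x y : ℤ[i]) : ¬GaussianEven (x + y) ↔
    (GaussianEven x ∧ ¬GaussianEven y) ∨ (¬GaussianEven x ∧ GaussianEven y) := by
  simp only [gaussianEven_iff_parity_eq_zero, map_add]
  generalize parity x = a, parity y = b
  revert a b
  decide

theorem Int.two_dvd_iff_two_mul_cast_zmod_four (n : ℤ) : 2 ∣ n ↔ 2 * (n : ZMod 4) = 0 := by
  rw [show (2 : ZMod 4) * n = ((2 * n : ℤ) : ZMod 4) by push_cast; rfl,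
    ZMod.intCast_zmod_eq_zero_iff_dvd]
  omega

theorem two_dvd_of_sq_add_sq_eq_sq {α β γ : ℤ[i]} (h : α ^ 2 + β ^ 2 = γ ^ 2)
    (hα : GaussianEven α) (hβ : ¬GaussianEven β) (hγ : ¬GaussianEven γ) :
    2 ∣ α ∧ 2 ∣ γ + β := by
  have hre : α.re ^ 2 - α.im ^ 2 + (β.re ^ 2 - β.im ^ 2) = γ.re ^ 2 - γ.im ^ 2 := by
    have := congrArg Zsqrtd.re h
    simp only [sq, Zsqrtd.re_add, Zsqrtd.re_mul] at this
    linarith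
  have him : α.re * α.im + β.re * β.im = γ.re * γ.im := by
    have := congrArg Zsqrtd.im h
    simp only [sq, Zsqrtd.im_add, Zsqrtd.im_mul] at this
    linarith
  have mod_four : ∀ a b c d e f : ZMod 4,
      a ^ 2 - b ^ 2 + (c ^ 2 - d ^ 2) = e ^ 2 - f ^ 2 ∧ a * b + c * d = e * f ∧
        2 * (a + b) = 0 ∧ 2 * (c + d) ≠ 0 ∧ 2 * (e + f) ≠ 0 →
      (2 * a = 0 ∧ 2 * b = 0) ∧ 2 * (e + c) = 0 ∧ 2 * (f + d) = 0 := by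
    decide
  simp only [gaussianEven_iff_two_dvd_re_add_im, two_dvd_iff, Zsqrtd.re_add, Zsqrtd.im_add,
    Int.two_dvd_iff_two_mul_cast_zmod_four] at hα hβ hγ ⊢
  push_cast at hα hβ hγ ⊢
  exact mod_four _ _ _ _ _ _
    ⟨by exact_mod_cast congrArg (Int.cast : ℤ → ZMod 4) hre,
      by exact_mod_cast congrArg (Int.cast : ℤ → ZMod 4) him, hα, hβ, hγ⟩

/-- parametrization of primitive Pythagorean triples in
`ℤ[i]`.  If `α² + β² = γ²`, every common divisor of `α, β, γ` is a unit,
`α` is even and `β, γ` are odd, then `α = 2ε₁κτ` and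
`{β, γ} = {ε₂(κ² − τ²), ε₃(κ² + τ²)}` for some coprime `κ, τ ∈ ℤ[i]` of
different parity and units `ε₁, ε₂, ε₃`. -/
theorem primitive_pythagorean_triple_param (α β γ : GaussianInt)
    (hpyth : α ^ 2 + β ^ 2 = γ ^ 2)
    (hprim : ∀ δ : GaussianInt, δ ∣ α → δ ∣ β → δ ∣ γ → IsUnit δ)
    (hα : GaussianEven α) (hβ : ¬ GaussianEven β) (hγ : ¬ GaussianEven γ) :
    ∃ κ τ : GaussianInt,
      ((GaussianEven κ ∧ ¬ GaussianEven τ) ∨ (¬ GaussianEven κ ∧ GaussianEven τ)) ∧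
      (∀ δ : GaussianInt, δ ∣ κ → δ ∣ τ → IsUnit δ) ∧
      ∃ ε₁ ε₂ ε₃ : GaussianIntˣ,
        α = 2 * (ε₁ : GaussianInt) * κ * τ ∧
        ((β = (ε₂ : GaussianInt) * (κ ^ 2 - τ ^ 2) ∧
          γ = (ε₃ : GaussianInt) * (κ ^ 2 + τ ^ 2)) ∨
         (β = (ε₂ : GaussianInt) * (κ ^ 2 + τ ^ 2) ∧
          γ = (ε₃ : GaussianInt) * (κ ^ 2 - τ ^ 2))) := by
  obtain ⟨⟨a, rfl⟩, u, hu⟩ := two_dvd_of_sq_add_sq_eq_sq hpyth hα hβ hγ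
  obtain ⟨v, rfl, rfl⟩ : ∃ v, β = u - v ∧ γ = u + v := ⟨u - β, by ring, by linear_combination hu⟩
  have huv : u * v = a ^ 2 :=
    mul_left_cancel₀ (by norm_num : (4 : ℤ[i]) ≠ 0) (by linear_combination -hpyth)
  have hcop : IsCoprime u v := by
    refine isCoprime_of_prime_dvd (fun ⟨hu0, hv0⟩ ↦ hβ ?_) fun p hp hpu hpv ↦ hp.not_isUnit ?_
    · simp [hu0, hv0, gaussianEven_iff_parity_eq_zero]
    have hpa : p ∣ a := hp.dvd_of_dvd_pow (huv ▸ dvd_mul_of_dvd_left hpu v)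
    exact hprim p (dvd_mul_of_dvd_right hpa 2) (dvd_sub hpu hpv) (dvd_add hpu hpv)
  obtain ⟨κ, τ, εu, εv, w, rfl, rfl, rfl, hε⟩ := exists_eq_sq_of_isCoprime_of_mul_eq_sq hcop huv
  refine ⟨κ, τ, ?_, fun δ hκ hτ ↦ hcop.isUnit_of_dvd' ?_ ?_, w, εu, εu, by ring, ?_⟩
  · simpa [gaussianEven_unit_mul_pow] using (not_gaussianEven_add _ _).mp hγ
  · exact (dvd_pow hκ two_ne_zero).mul_left _
  · exact (dvd_pow hτ two_ne_zero).mul_left _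
  rcases hε with rfl | rfl
  · exact .inl ⟨by ring, by ring⟩
  · exact .inr ⟨by push_cast; ring, by push_cast; ring⟩
end

section
/- (M. Brancheva) The sum of the lengths of the sides of a Diophantine triangle is always even: if A, B, C are points of ℤ × ℤ and a, b, c are nonnegative integers with a² = (B₁ − C₁)² + (B₂ − C₂)², b² = (A₁ − C₁)² + (A₂ − C₂)² and c² = (A₁ − B₁)² + (A₂ − B₂)², then a + b + c is even. -/
/-! Since `k ^ 2 ≡ k (mod 2)`, a Pythagorean relation `n ^ 2 = x ^ 2 + y ^ 2` forces
`n ≡ x + y (mod 2)`. Each side length is therefore congruent to the sum of its coordinate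
differences, and summed around the triangle these differences cancel modulo 2. -/

theorem Int.even_sub_add_of_sq_eq_sq_add_sq {n x y : ℤ} (h : n ^ 2 = x ^ 2 + y ^ 2) :
    Even (n - (x + y)) := by
  have hsq : ∀ k : ℤ, Even (k ^ 2 - k) := fun k => by
    simpa [sq, mul_sub] using Int.even_mul_pred_self k
  have hrw : n - (x + y) = (x ^ 2 - x) + (y ^ 2 - y) - (n ^ 2 - n) := by linear_combination h
  rw [hrw]
  exact ((hsq x).add (hsq y)).sub (hsq n)

/-- M. Brancheva: the sum of the side lengths of a
Diophantine triangle is even. -/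
theorem diophantine_triangle_perimeter_even (A B C : ℤ × ℤ) (a b c : ℕ)
    (ha : (a : ℤ) ^ 2 = (B.1 - C.1) ^ 2 + (B.2 - C.2) ^ 2)
    (hb : (b : ℤ) ^ 2 = (A.1 - C.1) ^ 2 + (A.2 - C.2) ^ 2)
    (hc : (c : ℤ) ^ 2 = (A.1 - B.1) ^ 2 + (A.2 - B.2) ^ 2) :
    Even (a + b + c) := by
  have hdiff : ((a + b + c : ℕ) : ℤ) =
      ((a : ℤ) - ((B.1 - C.1) + (B.2 - C.2))) + ((b : ℤ) - ((A.1 - C.1) + (A.2 - C.2))) +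
        ((c : ℤ) - ((A.1 - B.1) + (A.2 - B.2))) + 2 * (A.1 + A.2 - C.1 - C.2) := by
    push_cast; ring
  rw [← Int.even_coe_nat, hdiff]
  exact ((Int.even_sub_add_of_sq_eq_sq_add_sq ha).add (Int.even_sub_add_of_sq_eq_sq_add_sq hb)
    |>.add (Int.even_sub_add_of_sq_eq_sq_add_sq hc)).add (even_two_mul _)
end

section
/- The sum of the lengths of the segments of a closed path in a Diophantine figure is an even integer: if n ≥ 1, P₀, P₁, …, Pₙ are points of ℤ × ℤ with Pₙ = P₀, and d₀, …, d_{n−1} are nonnegative integers with d_j² equal to the squared Euclidean distance between P_j and P_{j+1} for each j, then d₀ + d₁ + ⋯ + d_{n−1} is even. -/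
/-!
Modulo 2 every element is idempotent, so `d² = a² + b²` forces `d ≡ a + b`. Hence the length of
the segment from `(x, y)` to `(x', y')` is congruent to `(x + y) - (x' + y')` modulo 2, and along
a closed path these differences telescope to zero.
-/

theorem Int.cast_zmod_two_eq_add_of_sq_eq_add_sq {d a b : ℤ} (h : d ^ 2 = a ^ 2 + b ^ 2) :
    (d : ZMod 2) = a + b := by
  have h2 : (d : ZMod 2) ^ 2 = (a : ZMod 2) ^ 2 + (b : ZMod 2) ^ 2 := by
    exact_mod_cast congrArg (Int.cast : ℤ → ZMod 2) h
  simpa only [ZMod.pow_card] using h2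

theorem diophantine_closed_path_length_even_general (n : ℕ)
    (P : ℕ → ℤ × ℤ) (hclosed : P n = P 0) (d : ℕ → ℕ)
    (hd : ∀ j < n, (d j : ℤ) ^ 2 =
      ((P j).1 - (P (j + 1)).1) ^ 2 + ((P j).2 - (P (j + 1)).2) ^ 2) :
    Even (∑ j ∈ Finset.range n, d j) := by
  let f : ℤ × ℤ → ZMod 2 := fun p => ((p.1 + p.2 : ℤ) : ZMod 2)
  have hstep : ∀ j ∈ Finset.range n, (d j : ZMod 2) = f (P j) - f (P (j + 1)) := by
    intro j hj
    have h := Int.cast_zmod_two_eq_add_of_sq_eq_add_sq (hd j (Finset.mem_range.mp hj))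
    push_cast [f] at h ⊢
    rw [h]
    ring
  rw [← ZMod.natCast_eq_zero_iff_even, Nat.cast_sum, Finset.sum_congr rfl hstep,
    Finset.sum_range_sub' (fun j => f (P j)), hclosed, sub_self]

/-- the sum of the lengths of the segments of a closed
path in a Diophantine figure is even. -/
theorem diophantine_closed_path_length_even (n : ℕ) (hn : 1 ≤ n)
    (P : ℕ → ℤ × ℤ) (hclosed : P n = P 0) (d : ℕ → ℕ)
    (hd : ∀ j < n, (d j : ℤ) ^ 2 =
      ((P j).1 - (P (j + 1)).1) ^ 2 + ((P j).2 - (P (j + 1)).2) ^ 2) :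
    Even (∑ j ∈ Finset.range n, d j) :=
  diophantine_closed_path_length_even_general n P hclosed d hd
end

section
/- (M. Brancheva) Let κ(n) denote the number of Pythagorean triangles with cathetus n, i.e. the number of pairs (x, z) of positive integers with x² + n² = z². Then κ(n) = O(n^ε) for every ε > 0; in particular, for every real ε > 0 the quotient κ(n)/n^ε tends to 0 as n → ∞. -/
/-!
A solution `(x, z)` of `x² + n² = z²` gives the factorization `n² = (z - x)(z + x)`, and the
factorization determines the solution, so `κ(n)` is at most the number `d(n²)` of divisors
of `n²`.
The divisor bound `d(m) = O(m^ε)` follows from `d(m) / m^ε = ∏_{p^a ∥ m} (a + 1) / (p^ε)^a`: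
Bernoulli's inequality bounds each factor by `max 1 (p^ε - 1)⁻¹`, which equals `1` as soon as
`p^ε ≥ 2`, so only the finitely many primes below `2^(1/ε)` contribute to the product.
-/

open Filter Asymptotics

/-- `kappa n` is the number of Pythagorean triangles with cathetus `n`,
i.e. the number of pairs `(x, z)` of positive integers with
`x² + n² = z²`. -/
noncomputable def kappa (n : ℕ) : ℕ :=
  Nat.card {p : ℕ × ℕ // 0 < p.1 ∧ 0 < p.2 ∧ p.1 ^ 2 + n ^ 2 = p.2 ^ 2}

open Finset

theorem add_one_le_max_one_inv_mul_pow {t x : ℝ} (ht : 0 < t) (hx : 1 + t ≤ x) (a : ℕ) :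
    (a : ℝ) + 1 ≤ max 1 t⁻¹ * x ^ a := by
  have bernoulli : 1 + a * t ≤ x ^ a :=
    (one_add_mul_le_pow (by linarith) a).trans (pow_le_pow_left₀ (by linarith) hx a)
  calc (a : ℝ) + 1 ≤ max 1 t⁻¹ * (1 + a * t) := by
        rcases le_total 1 t with h | h
        · rw [max_eq_left (inv_le_one_of_one_le₀ h), one_mul]
          nlinarith [a.cast_nonneg (α := ℝ)]
        · rw [max_eq_right ((one_le_inv₀ ht).2 h), mul_add, mul_one, mul_comm (a : ℝ),
            inv_mul_cancel_left₀ ht.ne']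
          linarith [(one_le_inv₀ ht).2 h]
    _ ≤ max 1 t⁻¹ * x ^ a := by gcongr

theorem Finset.exists_prod_le_of_eventually_eq_one {f : ℕ → ℝ} (hf : ∀ p, 1 ≤ f p)
    (hf_eq_one : ∀ᶠ p in atTop, f p = 1) :
    ∃ C, ∀ s : Finset ℕ, ∏ p ∈ s, f p ≤ C := by
  obtain ⟨B, hB⟩ := eventually_atTop.1 hf_eq_one
  refine ⟨∏ p ∈ range B, f p, fun s => ?_⟩
  calc ∏ p ∈ s, f p = ∏ p ∈ s.filter (· < B), f p :=
        (prod_filter_of_ne fun p _ h => by_contra fun hp => h (hB p (not_lt.1 hp))).symm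
    _ ≤ ∏ p ∈ range B, f p :=
        prod_le_prod_of_subset_of_one_le (fun p hp => mem_range.2 (mem_filter.1 hp).2)
          (fun p _ => zero_le_one.trans (hf p)) fun p _ _ => hf p

theorem isLittleO_rpow_rpow_atTop {a b : ℝ} (hab : a < b) :
    (fun x : ℝ => x ^ a) =o[atTop] fun x => x ^ b := by
  refine (isLittleO_iff_tendsto' ?_).2 ((tendsto_rpow_neg_atTop (sub_pos.2 hab)).congr' ?_)
  all_goals filter_upwards [eventually_gt_atTop 0] with x hx
  · exact fun h => absurd h (Real.rpow_pos_of_pos hx b).ne'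
  · rw [← Real.rpow_sub hx, neg_sub]

namespace Nat

theorem cast_rpow_eq_prod_primeFactors {n : ℕ} (hn : n ≠ 0) (ε : ℝ) :
    (n : ℝ) ^ ε = ∏ p ∈ n.primeFactors, ((p : ℝ) ^ ε) ^ n.factorization p := by
  conv_lhs => rw [← prod_factorization_pow_eq_self hn]
  rw [Finsupp.prod, support_factorization, cast_prod,
    ← Real.finsetProd_rpow _ _ fun p _ => by positivity]
  refine prod_congr rfl fun p _ => ?_
  rw [cast_pow, Real.rpow_pow_comm p.cast_nonneg]

theorem card_divisors_le_prod_mul_rpow {ε : ℝ} (hε : 0 < ε) {n : ℕ} (hn : n ≠ 0) :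
    (#n.divisors : ℝ) ≤
      (∏ p ∈ n.primeFactors, max 1 ((p : ℝ) ^ ε - 1)⁻¹) * (n : ℝ) ^ ε := by
  rw [card_divisors hn, cast_rpow_eq_prod_primeFactors hn, ← prod_mul_distrib]
  push_cast
  refine prod_le_prod (fun _ _ => by positivity) fun p hp => ?_
  have hp : 1 < (p : ℝ) ^ ε :=
    Real.one_lt_rpow (mod_cast (prime_of_mem_primeFactors hp).one_lt) hε
  exact add_one_le_max_one_inv_mul_pow (sub_pos.2 hp) (by linarith) _

theorem card_divisors_isBigO_rpow {ε : ℝ} (hε : 0 < ε) :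
    (fun n : ℕ => (#n.divisors : ℝ)) =O[atTop] fun n => (n : ℝ) ^ ε := by
  have h_eq_one : ∀ᶠ p : ℕ in atTop, max 1 ((p : ℝ) ^ ε - 1)⁻¹ = 1 := by
    have h_large := (tendsto_rpow_atTop hε).comp tendsto_natCast_atTop_atTop
    filter_upwards [h_large.eventually_ge_atTop 2] with p hp
    rw [Function.comp_apply] at hp
    exact max_eq_left (inv_le_one_of_one_le₀ (by linarith))
  obtain ⟨C, hC⟩ := exists_prod_le_of_eventually_eq_one (fun p => le_max_left _ _) h_eq_one
  refine IsBigO.of_bound C ?_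
  filter_upwards [eventually_ne_atTop 0] with n hn
  rw [Real.norm_of_nonneg (by positivity), Real.norm_of_nonneg (by positivity)]
  exact (card_divisors_le_prod_mul_rpow hε hn).trans (by gcongr; exact hC _)

end Nat

theorem lt_and_sub_mul_add_eq_of_sq_add_sq_eq {n x z : ℕ} (hn : n ≠ 0)
    (h : x ^ 2 + n ^ 2 = z ^ 2) : x < z ∧ (z - x) * (z + x) = n ^ 2 := by
  have hn2 : 0 < n ^ 2 := by positivity
  have hxz : x < z := lt_of_pow_lt_pow_left₀ 2 z.zero_le (by omega)
  refine ⟨hxz, ?_⟩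
  rw [mul_comm, ← Nat.sq_sub_sq]
  omega

theorem kappa_le_card_divisors_sq {n : ℕ} (hn : n ≠ 0) : kappa n ≤ #(n ^ 2).divisors := by
  rw [← card_map, Nat.map_div_right_divisors, kappa, ← Nat.card_eq_finsetCard]
  refine Nat.card_le_card_of_injective (fun p => ⟨(p.1.2 - p.1.1, p.1.2 + p.1.1), ?_⟩) ?_
  · obtain ⟨-, -, h⟩ := p.2
    exact Nat.mem_divisorsAntidiagonal.2
      ⟨(lt_and_sub_mul_add_eq_of_sq_add_sq_eq hn h).2, by positivity⟩
  · intro ⟨⟨x, z⟩, _, _, h⟩ ⟨⟨x', z'⟩, _, _, h'⟩ h_pair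
    have hxz := (lt_and_sub_mul_add_eq_of_sq_add_sq_eq hn h).1
    have hxz' := (lt_and_sub_mul_add_eq_of_sq_add_sq_eq hn h').1
    simp only [Subtype.mk.injEq, Prod.mk.injEq] at h_pair ⊢
    omega

theorem kappa_isBigO_rpow {ε : ℝ} (hε : 0 < ε) :
    (fun n : ℕ => (kappa n : ℝ)) =O[atTop] fun n => (n : ℝ) ^ ε := by
  have h_sq := (Nat.card_divisors_isBigO_rpow (half_pos hε)).comp_tendsto
    (tendsto_pow_atTop (α := ℕ) two_ne_zero)
  refine (IsBigO.of_bound 1 ?_).trans (h_sq.congr_right fun n => ?_)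
  · filter_upwards [eventually_ne_atTop 0] with n hn
    simpa using kappa_le_card_divisors_sq hn
  · rw [Function.comp_apply, Nat.cast_pow, ← Real.rpow_natCast, ← Real.rpow_mul n.cast_nonneg]
    ring_nf

/-- M. Brancheva: `κ(n) = O(n^ε)` for every `ε > 0`; in
particular `κ(n)/n^ε → 0` as `n → ∞`. -/
theorem kappa_isBigO_rpow_and_tendsto_zero :
    ∀ ε : ℝ, 0 < ε →
      ((fun n : ℕ => (kappa n : ℝ)) =O[atTop] fun n : ℕ => (n : ℝ) ^ ε) ∧
      Tendsto (fun n : ℕ => (kappa n : ℝ) / (n : ℝ) ^ ε) atTop (nhds 0) := by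
  intro ε hε
  refine ⟨kappa_isBigO_rpow hε, ?_⟩
  have h_half := (isLittleO_rpow_rpow_atTop (half_lt_self hε)).comp_tendsto
    tendsto_natCast_atTop_atTop
  exact ((kappa_isBigO_rpow (half_pos hε)).trans_isLittleO h_half).tendsto_div_nhds_zero
end

section
/- (Erdős) The vertices of an infinite Cartesian Erdős graph are situated on a straight line: if S is an infinite set of points of the Euclidean plane ℝ² such that the distance between any two points of S is an integer, then all points of S are collinear. -/
/-!
Pick three non-collinear points `a, b, c ∈ S`. For `x ∈ S` the numbers `dist x a - dist x b` and
`dist x a - dist x c` are integers bounded by `dist a b` and `dist a c`, so `S` is covered by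
finitely many sets on which both differences are fixed, say equal to `k` and `m`. Each such set is
finite: squaring the equations makes `⟪b - a, x - a⟫` and `⟪c - a, x - a⟫` affine functions of
`r = dist x a`, so in the plane `x - a = r • P + Q` for fixed `P, Q`, and then `‖r • P + Q‖ = r` is
a nontrivial quadratic equation for `r` unless `b - a` and `c - a` are both multiples of `P`.
-/

open Module Polynomial RealInnerProductSpace

theorem exists_linearIndependent_sub_of_not_collinear {k V : Type*} [Field k] [AddCommGroup V]
    [Module k V] {s : Set V} (hs : ¬Collinear k s) :
    ∃ a ∈ s, ∃ b ∈ s, ∃ c ∈ s, LinearIndependent k ![b - a, c - a] := by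
  rcases s.eq_empty_or_nonempty with rfl | ⟨a, ha⟩
  · exact absurd (collinear_empty k V) hs
  obtain ⟨b, hb, hba⟩ : ∃ b ∈ s, b ≠ a := by
    by_contra! h
    exact hs ((collinear_iff_of_mem ha).2 ⟨0, fun p hp => ⟨0, by simp [h p hp]⟩⟩)
  obtain ⟨c, hc, hcab⟩ : ∃ c ∈ s, ∀ r : k, r • (b - a) ≠ c - a := by
    by_contra! h
    refine hs ((collinear_iff_of_mem ha).2 ⟨b - a, fun p hp => ?_⟩)
    obtain ⟨r, hr⟩ := h p hp
    exact ⟨r, by rw [vadd_eq_add, hr, sub_add_cancel]⟩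
  exact ⟨a, ha, b, hb, c, hc, (LinearIndependent.pair_iff' (sub_ne_zero.2 hba)).2 hcab⟩

theorem dist_sub_dist_mem_image_intCast_Icc {X : Type*} [PseudoMetricSpace X] {x p q : X}
    {n m : ℕ} (hn : dist x p = n) (hm : dist x q = m) :
    dist x p - dist x q ∈ ((↑) : ℤ → ℝ) '' Set.Icc (-⌈dist p q⌉) ⌈dist p q⌉ := by
  have hle : |((n - m : ℤ) : ℝ)| ≤ ⌈dist p q⌉ := by
    push_cast
    rw [← hn, ← hm, dist_comm x p, dist_comm x q]
    exact (abs_dist_sub_le p q x).trans (Int.le_ceil _)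
  refine ⟨n - m, abs_le.1 (by exact_mod_cast hle), ?_⟩
  rw [hn, hm]
  push_cast
  ring

section InnerProductSpace

variable {E : Type*} [NormedAddCommGroup E] [InnerProductSpace ℝ E]

theorem finite_setOf_norm_smul_add_eq {P Q : E} (h : Q ≠ 0 ∨ ‖P‖ ≠ 1) :
    {r : ℝ | ‖r • P + Q‖ = r}.Finite := by
  set p : ℝ[X] := C (‖P‖ ^ 2 - 1) * X ^ 2 + C (2 * ⟪P, Q⟫) * X + C (‖Q‖ ^ 2)
  have heval : ∀ r, p.eval r = ‖r • P + Q‖ ^ 2 - r ^ 2 := by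
    intro r
    simp only [p, eval_add, eval_mul, eval_pow, eval_C, eval_X]
    rw [norm_add_sq_real, norm_smul, real_inner_smul_left, Real.norm_eq_abs, mul_pow, sq_abs]
    ring
  by_contra hinf
  have hp : p = 0 := eq_zero_of_infinite_isRoot p <| Set.Infinite.mono
    (fun r (hr : ‖r • P + Q‖ = r) => by simp [IsRoot, heval, hr]) hinf
  have hQ : Q = 0 := by simpa [hp, eq_comm] using heval 0
  have hP : ‖P‖ ^ 2 - 1 = 0 := by simpa [hp, hQ] using (heval 1).symm
  exact h.elim (· hQ)
    (· ((pow_eq_one_iff_of_nonneg (norm_nonneg P) two_ne_zero).1 (sub_eq_zero.1 hP)))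

theorem eq_smul_of_inner_eq_of_norm_sq_eq {B P : E} {k : ℝ} (hP : ‖P‖ = 1) (hBP : ⟪B, P⟫ = k)
    (hB : ‖B‖ ^ 2 = k ^ 2) : B = k • P := by
  rw [← sub_eq_zero, ← norm_eq_zero, ← sq_eq_zero_iff (M₀ := ℝ), norm_sub_sq_real, norm_smul,
    real_inner_smul_right, hP, hBP, hB, Real.norm_eq_abs, mul_pow, sq_abs]
  ring

theorem inner_sub_eq_of_dist_sub_dist_eq {x a b : E} {k : ℝ} (h : dist x a - dist x b = k) :
    ⟪b - a, x - a⟫ = dist x a * k + (‖b - a‖ ^ 2 - k ^ 2) / 2 := by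
  have hsq : ‖(x - a) - (b - a)‖ ^ 2 = (dist x a - k) ^ 2 := by
    rw [sub_sub_sub_cancel_right, ← dist_eq_norm, ← h, sub_sub_cancel]
  rw [norm_sub_sq_real, ← dist_eq_norm, real_inner_comm] at hsq
  linarith

theorem bijective_inner_prod_inner (hE : finrank ℝ E = 2) {B C : E}
    (hBC : LinearIndependent ℝ ![B, C]) : Function.Bijective fun u : E => (⟪B, u⟫, ⟪C, u⟫) := by
  have : FiniteDimensional ℝ E := .of_finrank_eq_succ hE
  change Function.Bijective ((innerₗ E B).prod (innerₗ E C))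
  have hinj : Function.Injective ((innerₗ E B).prod (innerₗ E C)) := by
    rw [← LinearMap.ker_eq_bot, LinearMap.ker_eq_bot']
    intro u hu
    obtain ⟨huB, huC⟩ := Prod.mk_eq_zero.1 hu
    simp only [innerₗ_apply_apply] at huB huC
    have hspan : u ∈ Submodule.span ℝ {B, C} := by
      rw [← Matrix.range_cons_cons_empty, hBC.span_eq_top_of_card_eq_finrank (by simp [hE])]
      trivial
    obtain ⟨s, t, rfl⟩ := Submodule.mem_span_pair.1 hspan
    rw [← inner_self_eq_zero (𝕜 := ℝ), inner_add_left, real_inner_smul_left,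
      real_inner_smul_left, huB, huC]
    ring
  exact ⟨hinj, (LinearMap.injective_iff_surjective_of_finrank_eq_finrank (by simp [hE])).1 hinj⟩

theorem finite_setOf_dist_sub_dist_eq (hE : finrank ℝ E = 2) {a b c : E}
    (habc : LinearIndependent ℝ ![b - a, c - a]) (k m : ℝ) :
    {x | dist x a - dist x b = k ∧ dist x a - dist x c = m}.Finite := by
  have hinner := bijective_inner_prod_inner hE habc
  obtain ⟨P, hP⟩ := hinner.2 (k, m)
  obtain ⟨Q, hQ⟩ := hinner.2 ((‖b - a‖ ^ 2 - k ^ 2) / 2, (‖c - a‖ ^ 2 - m ^ 2) / 2)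
  simp only [Prod.mk.injEq] at hP hQ
  have hparam : ∀ x, dist x a - dist x b = k ∧ dist x a - dist x c = m →
      x - a = dist x a • P + Q := by
    rintro x ⟨hxb, hxc⟩
    refine hinner.1 (Prod.ext ?_ ?_) <;> simp only [inner_add_right, real_inner_smul_right, hP, hQ]
    · exact inner_sub_eq_of_dist_sub_dist_eq hxb
    · exact inner_sub_eq_of_dist_sub_dist_eq hxc
  have hnondeg : Q ≠ 0 ∨ ‖P‖ ≠ 1 := by
    by_contra! ⟨rfl, hP1⟩
    simp only [inner_zero_right, eq_comm (a := (0 : ℝ)), div_eq_zero_iff, sub_eq_zero,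
      two_ne_zero, or_false] at hQ
    have hb := eq_smul_of_inner_eq_of_norm_sq_eq hP1 hP.1 hQ.1
    have hc := eq_smul_of_inner_eq_of_norm_sq_eq hP1 hP.2 hQ.2
    obtain ⟨-, hk⟩ := LinearIndependent.pair_iff.1 habc m (-k) (by rw [hb, hc]; module)
    exact habc.ne_zero 0 (by simp [hb, neg_eq_zero.1 hk])
  refine ((finite_setOf_norm_smul_add_eq hnondeg).image fun r => a + (r • P + Q)).subset ?_
  intro x hx
  refine ⟨dist x a, ?_, by simp only [← hparam x hx, add_sub_cancel]⟩
  change ‖dist x a • P + Q‖ = dist x a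
  rw [← hparam x hx, dist_eq_norm]

end InnerProductSpace

/-- Erdős: an infinite set of points in the Euclidean
plane with pairwise integer distances is collinear. -/
theorem erdos_infinite_integer_distance_collinear
    (S : Set (EuclideanSpace ℝ (Fin 2))) (hS : S.Infinite)
    (hdist : ∀ p ∈ S, ∀ q ∈ S, ∃ n : ℕ, dist p q = (n : ℝ)) :
    Collinear ℝ S := by
  by_contra hcol
  obtain ⟨a, ha, b, hb, c, hc, habc⟩ := exists_linearIndependent_sub_of_not_collinear hcol
  let g (x : EuclideanSpace ℝ (Fin 2)) : ℝ × ℝ := (dist x a - dist x b, dist x a - dist x c)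
  have hfib (z : ℝ × ℝ) : (g ⁻¹' {z}).Finite :=
    (finite_setOf_dist_sub_dist_eq finrank_euclideanSpace_fin habc z.1 z.2).subset
      fun x hx => Prod.ext_iff.1 hx
  have hval : ∀ p ∈ S, ∀ x ∈ S,
      dist x a - dist x p ∈ ((↑) : ℤ → ℝ) '' Set.Icc (-⌈dist a p⌉) ⌈dist a p⌉ := by
    intro p hp x hx
    obtain ⟨n, hn⟩ := hdist x hx a ha
    obtain ⟨m, hm⟩ := hdist x hx p hp
    exact dist_sub_dist_mem_image_intCast_Icc hn hm
  have hvals_finite := ((Set.finite_Icc (-⌈dist a b⌉) ⌈dist a b⌉).image ((↑) : ℤ → ℝ)).prod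
    ((Set.finite_Icc (-⌈dist a c⌉) ⌈dist a c⌉).image ((↑) : ℤ → ℝ))
  exact hS ((hvals_finite.preimage' fun z _ => hfib z).subset
    fun x hx => Set.mk_mem_prod (hval b hb x hx) (hval c hc x hx))
end
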